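/- arXiv:1005.4945 — 2 statements merged into one kernel-verified Lean document; each statement's English description precedes it below -/
import Mathlib

section
/- Let N be a 3×3 real matrix, A ∈ ℝ^{m×3}, λ ∈ ℝ^{3×m}, and B ≠ 0. If Tr(A·λ) = B, Tr(A·N·λ) = 0, Tr(A·N²·λ) = 0, and Tr(A·N³·λ) = 0, then det(N) = 0. -/
lemma ch3 (N : Matrix (Fin 3) (Fin 3) ℝ) :
    N ^ 3 = N.trace • N ^ 2
      - (N 0 0 * N 1 1 - N 0 1 * N 1 0 + N 0 0 * N 2 2 - N 0 2 * N 2 0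
         + N 1 1 * N 2 2 - N 1 2 * N 2 1) • N
      + N.det • (1 : Matrix (Fin 3) (Fin 3) ℝ) := by
  ext i j
  simp only [pow_succ, pow_zero, Matrix.one_mul, Matrix.sub_apply, Matrix.add_apply,
    Matrix.smul_apply, Matrix.mul_apply, Fin.sum_univ_three, Matrix.det_fin_three,
    Matrix.trace_fin_three, Matrix.one_apply, smul_eq_mul]
  fin_cases i <;> fin_cases j <;> simp <;> ring

/-- Rank-3 case: if Tr(A·λ) = B ≠ 0 and Tr(A·Nʲ·λ) = 0 for j = 1,2,3
for a 3×3 matrix N, then det(N) = 0. -/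
theorem det_zero_rank_three (m : ℕ) (A : Matrix (Fin m) (Fin 3) ℝ)
    (N : Matrix (Fin 3) (Fin 3) ℝ) (lam : Matrix (Fin 3) (Fin m) ℝ) (B : ℝ)
    (hB : B ≠ 0) (h0 : (A * lam).trace = B)
    (h1 : (A * N * lam).trace = 0) (h2 : (A * N ^ 2 * lam).trace = 0)
    (h3 : (A * N ^ 3 * lam).trace = 0) :
    N.det = 0 := by
  have key : (A * N ^ 3 * lam).trace
      = N.trace * (A * N ^ 2 * lam).trace
        - (N 0 0 * N 1 1 - N 0 1 * N 1 0 + N 0 0 * N 2 2 - N 0 2 * N 2 0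
           + N 1 1 * N 2 2 - N 1 2 * N 2 1) * (A * N * lam).trace
        + N.det * (A * lam).trace := by
    rw [ch3 N]
    simp [Matrix.mul_sub, Matrix.sub_mul, Matrix.mul_add, Matrix.add_mul,
      Matrix.mul_smul, Matrix.smul_mul, Matrix.trace_sub, Matrix.trace_add,
      Matrix.trace_smul, smul_eq_mul, Matrix.mul_assoc]
  rw [h0, h1, h2, h3] at key
  simpa [hB, eq_comm] using key
end

section
/- The dispersion polynomial of the hydrodynamic system: for the 5×5 matrix L(λ) = λ₀·A⁰(u) + λᵢ·Aⁱ(u) built from the Euler matrices A⁰, A¹, A², A³ of the rotating fluid equations, det(L) factors as (λ₀ + v·λ⃗)³ · [ (λ₀ + v·λ⃗)² − (κp/ρ)|λ⃗|² ] (up to sign convention). -/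
open Matrix

/-!
Collecting terms, `L(λ)` is `a = λ₀ + v·λ⃗` on the diagonal plus three couplings: pressure into the
velocity rows (`λ⃗/ρ`), velocity into the density row (`ρλ⃗`) and density into the pressure row
(`-κpa/ρ`). Besides the identity, the only permutations with nonzero weight in the Leibniz
expansion are the 3-cycles velocityᵢ → pressure → density → velocityᵢ, each fixing two diagonal
entries, so `det L = a⁵ - a³(κp/ρ)|λ⃗|²`.
-/

def acousticMatrix {R : Type*} [CommRing R] (a h : R) (u w : Fin 3 → R) :
    Matrix (Fin 5) (Fin 5) R :=
  !![a,0,0,0,u 0; 0,a,0,0,u 1; 0,0,a,0,u 2; w 0,w 1,w 2,a,0; 0,0,0,h,a]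

theorem det_acousticMatrix {R : Type*} [CommRing R] (a h : R) (u w : Fin 3 → R) :
    (acousticMatrix a h u w).det = a ^ 2 * (a ^ 3 + h * (u ⬝ᵥ w)) := by
  simp [acousticMatrix, det_succ_row_zero, Fin.sum_univ_succ, Fin.succAbove, dotProduct]
  ring

theorem euler_dispersion_relation_general (κ p ρ v₁ v₂ v₃ l₀ l₁ l₂ l₃ : ℝ) :
    let A0 : Matrix (Fin 5) (Fin 5) ℝ :=
      !![1,0,0,0,0; 0,1,0,0,0; 0,0,1,0,0; 0,0,0,1,0; 0,0,0,-κ*p/ρ,1]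
    let A1 : Matrix (Fin 5) (Fin 5) ℝ :=
      !![v₁,0,0,0,1/ρ; 0,v₁,0,0,0; 0,0,v₁,0,0; ρ,0,0,v₁,0; 0,0,0,-κ*p*v₁/ρ,v₁]
    let A2 : Matrix (Fin 5) (Fin 5) ℝ :=
      !![v₂,0,0,0,0; 0,v₂,0,0,1/ρ; 0,0,v₂,0,0; 0,ρ,0,v₂,0; 0,0,0,-κ*p*v₂/ρ,v₂]
    let A3 : Matrix (Fin 5) (Fin 5) ℝ :=
      !![v₃,0,0,0,0; 0,v₃,0,0,0; 0,0,v₃,0,1/ρ; 0,0,ρ,v₃,0; 0,0,0,-κ*p*v₃/ρ,v₃]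
    let L : Matrix (Fin 5) (Fin 5) ℝ := l₀ • A0 + l₁ • A1 + l₂ • A2 + l₃ • A3
    L.det = (l₀ + (v₁*l₁ + v₂*l₂ + v₃*l₃))^3 *
      ((l₀ + (v₁*l₁ + v₂*l₂ + v₃*l₃))^2 - (κ*p/ρ) * (l₁^2 + l₂^2 + l₃^2)) := by
  intro A0 A1 A2 A3 L
  obtain ⟨a, ha⟩ : ∃ a, a = l₀ + (v₁*l₁ + v₂*l₂ + v₃*l₃) := ⟨_, rfl⟩
  rw [← ha]
  have hL : L = acousticMatrix a (-(κ * p * a / ρ)) (ρ⁻¹ • ![l₁, l₂, l₃]) (ρ • ![l₁, l₂, l₃]) := by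
    ext i j
    fin_cases i <;> fin_cases j <;> simp [L, A0, A1, A2, A3, acousticMatrix, ha] <;> ring
  rw [hL, det_acousticMatrix]
  simp only [dotProduct, Fin.sum_univ_three, Pi.smul_apply, smul_eq_mul, cons_val]
  -- `ρ * ρ⁻¹` need not be `1`, but it is absorbed by the remaining factor `ρ⁻¹`, also at `ρ = 0`
  have hρ : ρ⁻¹ * ρ * ρ⁻¹ = ρ⁻¹ := by simpa using mul_inv_mul_cancel ρ⁻¹
  linear_combination (-(κ * p * a ^ 3) * (l₁ ^ 2 + l₂ ^ 2 + l₃ ^ 2)) * hρ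

/-- Dispersion polynomial of the rotating Euler system: the determinant of
L(λ) = λ₀A⁰ + λᵢAⁱ factors as (λ₀ + v·λ⃗)³·[(λ₀ + v·λ⃗)² − (κp/ρ)|λ⃗|²]. -/
theorem euler_dispersion_relation (κ p ρ v₁ v₂ v₃ l₀ l₁ l₂ l₃ : ℝ) (hρ : ρ ≠ 0) :
    let A0 : Matrix (Fin 5) (Fin 5) ℝ :=
      !![1,0,0,0,0; 0,1,0,0,0; 0,0,1,0,0; 0,0,0,1,0; 0,0,0,-κ*p/ρ,1]
    let A1 : Matrix (Fin 5) (Fin 5) ℝ :=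
      !![v₁,0,0,0,1/ρ; 0,v₁,0,0,0; 0,0,v₁,0,0; ρ,0,0,v₁,0; 0,0,0,-κ*p*v₁/ρ,v₁]
    let A2 : Matrix (Fin 5) (Fin 5) ℝ :=
      !![v₂,0,0,0,0; 0,v₂,0,0,1/ρ; 0,0,v₂,0,0; 0,ρ,0,v₂,0; 0,0,0,-κ*p*v₂/ρ,v₂]
    let A3 : Matrix (Fin 5) (Fin 5) ℝ :=
      !![v₃,0,0,0,0; 0,v₃,0,0,0; 0,0,v₃,0,1/ρ; 0,0,ρ,v₃,0; 0,0,0,-κ*p*v₃/ρ,v₃]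
    let L : Matrix (Fin 5) (Fin 5) ℝ := l₀ • A0 + l₁ • A1 + l₂ • A2 + l₃ • A3
    L.det = (l₀ + (v₁*l₁ + v₂*l₂ + v₃*l₃))^3 *
      ((l₀ + (v₁*l₁ + v₂*l₂ + v₃*l₃))^2 - (κ*p/ρ) * (l₁^2 + l₂^2 + l₃^2)) :=
  euler_dispersion_relation_general κ p ρ v₁ v₂ v₃ l₀ l₁ l₂ l₃
end
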